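/- Consider the persuasion instance with two worlds Ω = {ω1, ω2} with uniform prior, two agents {1, 2} of a single type, action set A = {a1, a2, a3}, and deviation bound d = 2. Denote by ρ1 the action profile where both agents play a1 and by ρ2 the profile where one agent plays a2 and the other plays a3. The agents' utilities are: under ρ1, playing a1 gives utility 1 in both worlds; under ρ2, playing a2 gives 0 in ω1 and 10 in ω2, playing a3 gives 10 in ω1 and 0 in ω2; the agents' utility is −1 for every other (own action, profile, world) combination. The principal's utility is 1 for ρ1 and 0 for every other profile, in both worlds. Then: (i) the policy that always reveals the world (sends distinct signals in ω1 and ω2) while recommending the joint action (a1, a1) is stable and yields the principal expected utility 1; (ii) the direct policy that always sends only the recommendation (a1, a1) with no additional information is not stable: the group deviation of both agents to (a2, a3) strictly increases the expected utility (equal to 5) of each under the prior belief. Consequently, restricting the principal to signals consisting only of recommended actions loses optimality, i.e., the classical revelation principle fails when d ≥ 2. -/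
import Mathlib


open scoped Classical BigOperators

/-!
Common definitions for Bayesian persuasion with externalities and agent types.

A persuasion instance consists of a finite set `Ω` of worlds with prior `μ`, a finite set `N`
of agents partitioned into types via `type : N → T`, a finite action set `A`, type utilities
`u : T → A → (T → A → ℕ) → Ω → ℝ` over action profiles `ρ : T → A → ℕ`, a principal utility
`u0 : (T → A → ℕ) → Ω → ℝ` and a deviation bound `d`.
-/

namespace Persuasion

variable {Ω N A T : Type}

/-- The action profile `ρ_a` of a joint action `a`: the number of agents of type `t`
playing action `b`. -/
noncomputable def profileOf [Fintype N] (type : N → T) (a : N → A) : T → A → ℕ :=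
  fun t b => (Finset.univ.filter fun i => type i = t ∧ a i = b).card

/-- Total number of deviating agents specified by a deviation `δ`. -/
def devSum [Fintype T] [Fintype A] (δ : T → A → A → ℕ) : ℕ :=
  ∑ t : T, ∑ b : A, ∑ b' : A, δ t b b'

/-- Membership in `D_*`: a deviation moves between `1` and `d` agents, never from an action
to itself. -/
def IsDev [Fintype T] [Fintype A] (d : ℕ) (δ : T → A → A → ℕ) : Prop :=
  (∀ t b, δ t b b = 0) ∧ 1 ≤ devSum δ ∧ devSum δ ≤ d

/-- Membership in `D_ρ`: the deviation is feasible from the action profile `ρ`. -/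
def FeasibleDev [Fintype A] (ρ : T → A → ℕ) (δ : T → A → A → ℕ) : Prop :=
  ∀ t b, (∑ b' : A, δ t b b') ≤ ρ t b

/-- `ρ ⊕ δ`: the action profile resulting from applying deviation `δ` to `ρ`. -/
def applyDev [Fintype A] (ρ : T → A → ℕ) (δ : T → A → A → ℕ) : T → A → ℕ :=
  fun t b => ρ t b - (∑ b' : A, δ t b b') + ∑ b' : A, δ t b' b

/-- `a ⊕ a'`: the joint action replacing `a i` by `a' i` for the deviating agents `i ∈ N'`. -/
noncomputable def updAction (a : N → A) (N' : Finset N) (a' : N → A) : N → A :=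
  fun i => if i ∈ N' then a' i else a i

/-- Stability of a recommended joint action `a` given per-agent posteriors `p i ∈ Δ(Ω)`
(public / semi-private sense): no group of at most `d` agents can deviate jointly so that
each member strictly gains in expectation. -/
def StableAt [Fintype Ω] [Fintype N] (type : N → T)
    (u : T → A → (T → A → ℕ) → Ω → ℝ) (d : ℕ) (a : N → A) (p : N → Ω → ℝ) : Prop :=
  ¬ ∃ (N' : Finset N) (a' : N → A),
      1 ≤ N'.card ∧ N'.card ≤ d ∧
      ∀ i ∈ N',
        0 < ∑ ω : Ω, p i ω *
            (u (type i) (updAction a N' a' i) (profileOf type (updAction a N' a')) ω -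
              u (type i) (a i) (profileOf type a) ω)

/-- Stability in the private sense, given per-agent joint posteriors
`P i ∈ Δ(A^N × Ω)` over joint actions and worlds. -/
def StablePrivAt [Fintype Ω] [Fintype N] [Fintype A] [DecidableEq N] (type : N → T)
    (u : T → A → (T → A → ℕ) → Ω → ℝ) (d : ℕ) (P : N → (N → A) → Ω → ℝ) : Prop :=
  ¬ ∃ (N' : Finset N) (a' : N → A),
      1 ≤ N'.card ∧ N'.card ≤ d ∧
      ∀ i ∈ N',
        0 < ∑ aT : N → A, ∑ ω : Ω, P i aT ω *
            (u (type i) (updAction aT N' a' i) (profileOf type (updAction aT N' a')) ω -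
              u (type i) (aT i) (profileOf type aT) ω)

/-- A (possibly infinitely-indexed, finitely supported) policy: for each world a probability
distribution over signals. -/
def IsPolicy {S : Type} (σ : Ω → S → ℝ) : Prop :=
  (∀ ω s, 0 ≤ σ ω s) ∧ (∀ ω, (Function.support (σ ω)).Finite) ∧ ∀ ω, (∑ᶠ s, σ ω s) = 1

/-- The total probability of a signal `s` under prior `μ` and policy `σ`. -/
noncomputable def PrSig [Fintype Ω] (μ : Ω → ℝ) {S : Type} (σ : Ω → S → ℝ) (s : S) : ℝ :=
  ∑ ω : Ω, μ ω * σ ω s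

/-- The (common, public) posterior over worlds induced by a signal `s`. -/
noncomputable def postPub [Fintype Ω] (μ : Ω → ℝ) {S : Type} (σ : Ω → S → ℝ) (s : S) :
    Ω → ℝ :=
  fun ω => μ ω * σ ω s / PrSig μ σ s

/-- The principal's expected utility of a policy whose signal `s` recommends
joint action `act s`. -/
noncomputable def utilP [Fintype Ω] [Fintype N] (type : N → T) (μ : Ω → ℝ)
    (u0 : (T → A → ℕ) → Ω → ℝ) {S : Type} (act : S → N → A) (σ : Ω → S → ℝ) : ℝ :=
  ∑ ω : Ω, μ ω * ∑ᶠ s : S, σ ω s * u0 (profileOf type (act s)) ω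

/-- A public policy is stable if every signal of positive probability is stable for the
common Bayesian posterior it induces. -/
def StablePubPolicy [Fintype Ω] [Fintype N] (type : N → T) (μ : Ω → ℝ)
    (u : T → A → (T → A → ℕ) → Ω → ℝ) (d : ℕ) {S : Type} (act : S → N → A)
    (σ : Ω → S → ℝ) : Prop :=
  ∀ s : S, 0 < PrSig μ σ s → StableAt type u d (act s) fun _ => postPub μ σ s

/-- The (public) blocking profile of a signal recommending `a` and inducing the common
posterior `p`: all tuples `(δ, t, b, a')` with `δ ∈ D_{ρ_a}`, `δ t b a' > 0` and such that
subtype `(t, b)` blocks the deviation to `a'`. -/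
def blockPub [Fintype Ω] [Fintype N] [Fintype A] [Fintype T] (type : N → T)
    (u : T → A → (T → A → ℕ) → Ω → ℝ) (d : ℕ) (a : N → A) (p : Ω → ℝ) :
    Set ((T → A → A → ℕ) × T × A × A) :=
  {x | IsDev d x.1 ∧ FeasibleDev (profileOf type a) x.1 ∧
       0 < x.1 x.2.1 x.2.2.1 x.2.2.2 ∧
       (∑ ω : Ω, p ω * u x.2.1 x.2.2.2 (applyDev (profileOf type a) x.1) ω) ≤
         ∑ ω : Ω, p ω * u x.2.1 x.2.2.1 (profileOf type a) ω}

/-- `B^pub_ρ`: the subsets of `D_ρ × 𝒯 × A × A` covering every feasible deviation. -/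
def Bpub [Fintype T] [Fintype A] (d : ℕ) (ρ : T → A → ℕ) :
    Set (Set ((T → A → A → ℕ) × T × A × A)) :=
  {β | (∀ x ∈ β, IsDev d x.1 ∧ FeasibleDev ρ x.1) ∧
       ∀ δ : T → A → A → ℕ, IsDev d δ → FeasibleDev ρ δ → ∃ x ∈ β, x.1 = δ}

/-- Semi-private marginal: the probability, in world `ω`, that the public part is `a` and
agent `i`'s private part is `gi`. -/
noncomputable def margSemi {G : Type} (σ : Ω → ((N → A) × (N → G)) → ℝ)
    (i : N) (a : N → A) (gi : G) (ω : Ω) : ℝ :=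
  ∑ᶠ g : N → G, if g i = gi then σ ω (a, g) else 0

/-- Total probability of agent `i`'s semi-private observation `(a, gi)`. -/
noncomputable def PrObsSemi [Fintype Ω] (μ : Ω → ℝ) {G : Type}
    (σ : Ω → ((N → A) × (N → G)) → ℝ) (i : N) (a : N → A) (gi : G) : ℝ :=
  ∑ ω : Ω, μ ω * margSemi σ i a gi ω

/-- Agent `i`'s posterior over worlds after the semi-private observation `(a, gi)`. -/
noncomputable def postSemi [Fintype Ω] (μ : Ω → ℝ) {G : Type}
    (σ : Ω → ((N → A) × (N → G)) → ℝ) (i : N) (a : N → A) (gi : G) : Ω → ℝ :=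
  fun ω => μ ω * margSemi σ i a gi ω / PrObsSemi μ σ i a gi

/-- A semi-private policy is stable if every meta-signal of positive probability is stable
for the per-agent posteriors it induces. -/
def StableSemiPolicy [Fintype Ω] [Fintype N] (type : N → T) (μ : Ω → ℝ)
    (u : T → A → (T → A → ℕ) → Ω → ℝ) (d : ℕ) {G : Type}
    (σ : Ω → ((N → A) × (N → G)) → ℝ) : Prop :=
  ∀ s : (N → A) × (N → G), 0 < PrSig μ σ s →
    StableAt type u d s.1 fun i => postSemi μ σ i s.1 (s.2 i)

/-- Agent `i`'s semi-private blocking profile, for a fixed selection rule `γsel` (a function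
of the recommended joint action and the agents' posteriors over worlds). -/
def blockSemi [Fintype N] [Fintype T] [Fintype A]
    (γsel : (N → A) → (N → Ω → ℝ) → (T → A → A → ℕ) → Finset A × Finset N)
    (type : N → T) (d : ℕ) (a : N → A) (p : N → Ω → ℝ) (i : N) :
    Set ((T → A → A → ℕ) × Finset A) :=
  {x | IsDev d x.1 ∧ FeasibleDev (profileOf type a) x.1 ∧
       (γsel a p x.1).1 = x.2 ∧ i ∈ (γsel a p x.1).2}

/-- `B^sm_aR`: the semi-private blocking profiles of stable meta-signals with recommended
joint action `aR`, over all possible posteriors. -/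
def Bsm [Fintype Ω] [Fintype N] [Fintype T] [Fintype A]
    (γsel : (N → A) → (N → Ω → ℝ) → (T → A → A → ℕ) → Finset A × Finset N)
    (type : N → T) (u : T → A → (T → A → ℕ) → Ω → ℝ) (d : ℕ) (aR : N → A) :
    Set (N → Set ((T → A → A → ℕ) × Finset A)) :=
  {β | ∃ p : N → Ω → ℝ,
        (∀ i, (∀ ω, 0 ≤ p i ω) ∧ (∑ ω : Ω, p i ω) = 1) ∧
        StableAt type u d aR p ∧
        β = fun i => blockSemi γsel type d aR p i}

/-- Private marginal: the probability, in world `ω`, that the recommended joint action is `aT`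
and agent `i` observes `o`. -/
noncomputable def margPriv {G : Type} (σ : Ω → ((N → A) × (N → G)) → ℝ)
    (i : N) (o : A × G) (aT : N → A) (ω : Ω) : ℝ :=
  ∑ᶠ g : N → G, if aT i = o.1 ∧ g i = o.2 then σ ω (aT, g) else 0

/-- Total probability of agent `i`'s private observation `o`. -/
noncomputable def PrObsPriv [Fintype Ω] (μ : Ω → ℝ) {G : Type}
    (σ : Ω → ((N → A) × (N → G)) → ℝ) (i : N) (o : A × G) : ℝ :=
  ∑ ω : Ω, μ ω * ∑ᶠ aT : N → A, margPriv σ i o aT ω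

/-- Agent `i`'s joint posterior over joint actions and worlds after the private
observation `o`. -/
noncomputable def postPriv [Fintype Ω] (μ : Ω → ℝ) {G : Type}
    (σ : Ω → ((N → A) × (N → G)) → ℝ) (i : N) (o : A × G) : (N → A) → Ω → ℝ :=
  fun aT ω => μ ω * margPriv σ i o aT ω / PrObsPriv μ σ i o

/-- A private policy is stable if every meta-signal of positive probability is stable for
the per-agent joint posteriors it induces. -/
def StablePrivPolicy [Fintype Ω] [Fintype N] [Fintype A] [DecidableEq N] (type : N → T)
    (μ : Ω → ℝ) (u : T → A → (T → A → ℕ) → Ω → ℝ) (d : ℕ) {G : Type}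
    (σ : Ω → ((N → A) × (N → G)) → ℝ) : Prop :=
  ∀ s : (N → A) × (N → G), 0 < PrSig μ σ s →
    StablePrivAt type u d fun i => postPriv μ σ i (s.1 i, s.2 i)

/-- The set of type-preserving permutations of the agents. -/
noncomputable def Mset [Fintype N] [DecidableEq N] (type : N → T) :
    Finset (Equiv.Perm N) :=
  Finset.univ.filter fun m => ∀ i, type (m i) = type i

/-- The lottery policy `λ(σ)`: draw `(a, g)` from `σ` and a uniformly random type-preserving
permutation `m`, and send agent `i` the signal `(a (m i), g (m i))`. -/
noncomputable def lot [Fintype N] [DecidableEq N] (type : N → T) {G : Type}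
    (σ : Ω → ((N → A) × (N → G)) → ℝ) : Ω → ((N → A) × (N → G)) → ℝ :=
  fun ω s' => ((Mset type).card : ℝ)⁻¹ *
    ∑ m ∈ Mset type, ∑ᶠ s : (N → A) × (N → G),
      if ((fun i => s.1 (m i), fun i => s.2 (m i)) : (N → A) × (N → G)) = s' then σ ω s
      else 0

/-- The lottery policy `λ̃(σ)` that additionally reveals to each agent its assigned index:
agent `i` receives `(a (m i), (g (m i), m i))`. -/
noncomputable def lotTilde [Fintype N] [DecidableEq N] (type : N → T) {G : Type}
    (σ : Ω → ((N → A) × (N → G)) → ℝ) : Ω → ((N → A) × (N → G × N)) → ℝ :=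
  fun ω s' => ((Mset type).card : ℝ)⁻¹ *
    ∑ m ∈ Mset type, ∑ᶠ s : (N → A) × (N → G),
      if ((fun i => s.1 (m i), fun i => (s.2 (m i), m i)) : (N → A) × (N → G × N)) = s'
      then σ ω s else 0

/-- Agent `i`'s joint posterior over action profiles and worlds after the private
observation `o`. -/
noncomputable def postProf [Fintype Ω] [Fintype N] (type : N → T) (μ : Ω → ℝ) {G : Type}
    (σ : Ω → ((N → A) × (N → G)) → ℝ) (i : N) (o : A × G) (ρ : T → A → ℕ) (ω : Ω) : ℝ :=
  μ ω * (∑ᶠ s : (N → A) × (N → G),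
      if profileOf type s.1 = ρ ∧ s.1 i = o.1 ∧ s.2 i = o.2 then σ ω s else 0) /
    PrObsPriv μ σ i o

/-- Agent `i`'s private blocking profile, for a fixed selection rule `γsel` (a function of
the recommended joint action and the agents' joint posteriors). -/
def blockPriv [Fintype N] [Fintype T] [Fintype A]
    (γsel : (N → A) → (N → (N → A) → Ω → ℝ) → (T → A → A → ℕ) → Finset A × Finset N)
    (type : N → T) (d : ℕ) (a : N → A) (P : N → (N → A) → Ω → ℝ) (i : N) :
    Set ((T → A → A → ℕ) × Finset A) :=
  {x | IsDev d x.1 ∧ FeasibleDev (profileOf type a) x.1 ∧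
       (γsel a P x.1).1 = x.2 ∧ i ∈ (γsel a P x.1).2}

/-- `B^pv_aR`: the private blocking profiles arising from stable meta-signals with
recommended joint action `aR`. -/
def Bpv [Fintype Ω] [Fintype N] [Fintype T] [Fintype A] [DecidableEq N]
    (γsel : (N → A) → (N → (N → A) → Ω → ℝ) → (T → A → A → ℕ) → Finset A × Finset N)
    (type : N → T) (u : T → A → (T → A → ℕ) → Ω → ℝ) (d : ℕ) (aR : N → A) :
    Set (N → Set ((T → A → A → ℕ) × Finset A)) :=
  {β | ∃ P : N → (N → A) → Ω → ℝ,
        (∀ i, (∀ aT ω, 0 ≤ P i aT ω) ∧ ((∑ aT : N → A, ∑ ω : Ω, P i aT ω) = 1) ∧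
              ∀ aT ω, P i aT ω ≠ 0 → aT i = aR i) ∧
        StablePrivAt type u d P ∧
        β = fun i => blockPriv γsel type d aR P i}

/-- The private blocking profile of a meta-signal `s` of the policy `σ`. -/
noncomputable def bProfile [Fintype Ω] [Fintype N] [Fintype T] [Fintype A]
    (γsel : (N → A) → (N → (N → A) → Ω → ℝ) → (T → A → A → ℕ) → Finset A × Finset N)
    (type : N → T) (d : ℕ) (μ : Ω → ℝ) {G : Type}
    (σ : Ω → ((N → A) × (N → G)) → ℝ) (s : (N → A) × (N → G)) :
    N → Set ((T → A → A → ℕ) × Finset A) :=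
  fun i => blockPriv γsel type d s.1 (fun j => postPriv μ σ j (s.1 j, s.2 j)) i

/-- `b(σ)`: the policy replacing every agent's private message by that agent's private
blocking profile (merging meta-signals with the same private signature). -/
noncomputable def bPol [Fintype Ω] [Fintype N] [Fintype T] [Fintype A]
    (γsel : (N → A) → (N → (N → A) → Ω → ℝ) → (T → A → A → ℕ) → Finset A × Finset N)
    (type : N → T) (d : ℕ) (μ : Ω → ℝ) {G : Type}
    (σ : Ω → ((N → A) × (N → G)) → ℝ) :
    Ω → ((N → A) × (N → Set ((T → A → A → ℕ) × Finset A))) → ℝ :=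
  fun ω sb => ∑ᶠ g : N → G,
    if bProfile γsel type d μ σ (sb.1, g) = sb.2 then σ ω (sb.1, g) else 0

end Persuasion

namespace Persuasion
namespace Stmt13

/-- The two worlds: `false = ω1`, `true = ω2`. -/
abbrev Wd := Bool
/-- The two agents. -/
abbrev Ag := Bool
/-- The three actions: `0 = a1`, `1 = a2`, `2 = a3`. -/
abbrev Ac := Fin 3

/-- All agents have the same (unique) type. -/
def ty : Ag → Unit := fun _ => ()

/-- The uniform prior over the two worlds. -/
noncomputable def μ13 : Wd → ℝ := fun _ => 1 / 2

/-- The profile `ρ1` in which both agents play `a1`. -/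
def ρ1 : Unit → Ac → ℕ := fun _ b => if b = 0 then 2 else 0
/-- The profile `ρ2` in which one agent plays `a2` and the other plays `a3`. -/
def ρ2 : Unit → Ac → ℕ := fun _ b => if b = 0 then 0 else 1

/-- The joint action `(a1, a1)`. -/
def v11 : Ag → Ac := fun _ => 0
/-- The joint (group) deviation `(a2, a3)`. -/
def vdev : Ag → Ac := fun i => if i = false then 1 else 2

/-- The public policy that always reveals the world (the signal carries the world) while
recommending the joint action `(a1, a1)`. -/
noncomputable def σrev : Wd → (Wd × (Ag → Ac)) → ℝ :=
  fun ω s => if s = (ω, v11) then 1 else 0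

/-- The direct, uninformative policy that always sends only the recommendation
`(a1, a1)`. -/
noncomputable def σdir : Wd → (Ag → Ac) → ℝ :=
  fun _ a => if a = v11 then 1 else 0

lemma prof_val (a : Ag → Ac) (b : Ac) :
    profileOf ty a () b = (if a false = b then 1 else 0) + (if a true = b then 1 else 0) := by
  classical
  rw [profileOf, Finset.card_filter, Fintype.sum_bool]
  simp [ty, add_comm]

lemma prof_v11 : profileOf ty v11 = ρ1 := by
  funext t b
  cases t
  rw [prof_val]
  by_cases h : b = 0 <;> simp [h, eq_comm, ρ1, v11]

lemma prof_vdev : profileOf ty vdev = ρ2 := by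
  funext t b
  cases t
  rw [prof_val, ρ2, vdev]
  fin_cases b <;> simp <;> decide

lemma eq_v11_of_prof {a : Ag → Ac} (h : profileOf ty a = ρ1) : a = v11 := by
  have h0 := congrFun (congrFun h ()) 0
  rw [prof_val] at h0
  simp only [ρ1, if_pos rfl] at h0
  funext i
  by_contra hne
  cases i <;> [by_cases h2 : a true = 0; by_cases h2 : a false = 0] <;>
    simp_all [v11]

lemma upd_univ (a a' : Ag → Ac) : updAction a Finset.univ a' = a' := by
  funext i; simp [updAction]

lemma not_stable_prior (u : Unit → Ac → (Unit → Ac → ℕ) → Wd → ℝ)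
    (hu1 : ∀ ω, u () 0 ρ1 ω = 1)
    (hu2 : u () 1 ρ2 false = 0) (hu3 : u () 1 ρ2 true = 10)
    (hu4 : u () 2 ρ2 false = 10) (hu5 : u () 2 ρ2 true = 0) :
    ¬ StableAt ty u 2 v11 (fun _ => μ13) := by
  rw [StableAt, not_not]
  refine ⟨Finset.univ, vdev, by decide, by decide, ?_⟩
  intro i _
  rw [upd_univ, prof_vdev, prof_v11]
  cases i <;>
    simp only [Fintype.sum_bool, updAction, Finset.mem_univ, if_pos, vdev, v11] <;>
    norm_num [hu1, hu2, hu3, hu4, hu5, μ13]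

lemma stable_point (u : Unit → Ac → (Unit → Ac → ℕ) → Wd → ℝ)
    (hu1 : ∀ ω, u () 0 ρ1 ω = 1)
    (hu2 : u () 1 ρ2 false = 0) (hu3 : u () 1 ρ2 true = 10)
    (hu4 : u () 2 ρ2 false = 10) (hu5 : u () 2 ρ2 true = 0)
    (hu6 : ∀ (b : Ac) (a : Ag → Ac) (ω : Wd),
      ¬(b = 0 ∧ profileOf ty a = ρ1) → ¬((b = 1 ∨ b = 2) ∧ profileOf ty a = ρ2) →
      u () b (profileOf ty a) ω = -1) (ω0 : Wd) :
    StableAt ty u 2 v11 (fun _ ω => if ω = ω0 then (1:ℝ) else 0) := by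
  rintro ⟨N', a', hc1, _, hg⟩
  set w := updAction v11 N' a' with hw
  have hgt : ∀ j ∈ N', 1 < u () (w j) (profileOf ty w) ω0 := by
    intro j hj
    have h := hg j hj
    rw [Fintype.sum_bool, prof_v11] at h
    have hv : v11 j = 0 := rfl
    rw [hv, hu1, hu1] at h
    cases ω0 <;> simp only [if_pos, if_neg, Bool.true_eq_false, Bool.false_eq_true,
      if_true, if_false, one_mul, zero_mul, add_zero, zero_add, reduceIte] at h <;>
      linarith
  have hmem : ∀ j, w j ≠ 0 → j ∈ N' := by
    intro j h
    by_contra hj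
    apply h
    simp [hw, updAction, hj, v11]
  obtain ⟨i0, hi0⟩ := Finset.card_pos.mp hc1
  by_cases hρ1 : profileOf ty w = ρ1
  · have hwv : w = v11 := eq_v11_of_prof hρ1
    have := hgt i0 hi0
    rw [hwv, prof_v11] at this
    have hv : v11 i0 = 0 := rfl
    rw [hv, hu1] at this
    linarith
  by_cases hρ2 : profileOf ty w = ρ2
  · cases ω0 with
    | false =>
      have h1 : ∃ j, w j = 1 := by
        have hp := prof_val w 1
        rw [hρ2] at hp
        by_cases h : w false = 1
        · exact ⟨false, h⟩
        · by_cases h' : w true = 1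
          · exact ⟨true, h'⟩
          · simp [h, h', ρ2] at hp
      obtain ⟨j, hj⟩ := h1
      have := hgt j (hmem j (by rw [hj]; decide))
      rw [hj, hρ2, hu2] at this
      linarith
    | true =>
      have h2 : ∃ j, w j = 2 := by
        have hp := prof_val w 2
        rw [hρ2] at hp
        by_cases h : w false = 2
        · exact ⟨false, h⟩
        · by_cases h' : w true = 2
          · exact ⟨true, h'⟩
          · simp [h, h', ρ2] at hp
      obtain ⟨j, hj⟩ := h2
      have := hgt j (hmem j (by rw [hj]; decide))
      rw [hj, hρ2, hu5] at this
      linarith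
  · have := hgt i0 hi0
    rw [hu6 (w i0) w ω0 (fun h => hρ1 h.2) (fun h => hρ2 h.2)] at this
    linarith

/-- **Failure of the classical revelation principle under group deviations (the example of
Section 3.1).** In the instance with two equally likely worlds, two agents of a single
type, actions `{a1, a2, a3}` and deviation bound `d = 2`, with the utilities described in
the hypotheses: (i) the policy that always reveals the world while recommending `(a1, a1)`
is stable and yields the principal expected utility `1`; (ii) the direct policy that always
sends only the recommendation `(a1, a1)` is not stable — the group deviation of both agents
to `(a2, a3)` gives each an expected utility of `5` under the prior, strictly more than
staying; and (iii) every stable direct policy (whose signals are just recommended joint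
actions) yields the principal expected utility strictly less than `1`. -/
theorem stmt13
    (u : Unit → Ac → (Unit → Ac → ℕ) → Wd → ℝ)
    (u0 : (Unit → Ac → ℕ) → Wd → ℝ)
    (hu1 : ∀ ω, u () 0 ρ1 ω = 1)
    (hu2 : u () 1 ρ2 false = 0)
    (hu3 : u () 1 ρ2 true = 10)
    (hu4 : u () 2 ρ2 false = 10)
    (hu5 : u () 2 ρ2 true = 0)
    (hu6 : ∀ (b : Ac) (a : Ag → Ac) (ω : Wd),
      ¬(b = 0 ∧ profileOf ty a = ρ1) → ¬((b = 1 ∨ b = 2) ∧ profileOf ty a = ρ2) →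
      u () b (profileOf ty a) ω = -1)
    (h01 : ∀ ω, u0 ρ1 ω = 1)
    (h02 : ∀ (a : Ag → Ac) (ω : Wd), profileOf ty a ≠ ρ1 → u0 (profileOf ty a) ω = 0) :
    (IsPolicy σrev ∧ StablePubPolicy ty μ13 u 2 (fun s => s.2) σrev ∧
      utilP ty μ13 u0 (fun s => s.2) σrev = 1) ∧
    (¬ StablePubPolicy ty μ13 u 2 (fun s => s) σdir ∧
      ¬ StableAt ty u 2 v11 (fun _ => μ13) ∧
      ∀ i : Ag,
        (∑ ω : Wd, μ13 ω * u () (vdev i) (profileOf ty vdev) ω) = 5 ∧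
        (∑ ω : Wd, μ13 ω * u () (v11 i) (profileOf ty v11) ω) <
          ∑ ω : Wd, μ13 ω * u () (vdev i) (profileOf ty vdev) ω) ∧
    (∀ σd : Wd → (Ag → Ac) → ℝ,
      IsPolicy σd → StablePubPolicy ty μ13 u 2 (fun s => s) σd →
      utilP ty μ13 u0 (fun s => s) σd < 1) := by
  refine ⟨⟨⟨?_, ?_, ?_⟩, ?_, ?_⟩, ⟨?_, ?_, ?_⟩, ?_⟩
  · -- σrev nonneg
    intro ω s
    rw [σrev]
    split <;> norm_num
  · intro ω
    exact Set.toFinite _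
  · intro ω
    rw [finsum_eq_sum_of_fintype]
    simp [σrev]
  · -- σrev stable
    intro s hs
    have hex : ∃ ω, σrev ω s ≠ 0 := by
      by_contra hc
      push_neg at hc
      rw [PrSig, Fintype.sum_bool, hc, hc] at hs
      norm_num at hs
    obtain ⟨ω0, hω0⟩ := hex
    have hs2 : s = (ω0, v11) := by
      by_contra h
      exact hω0 (if_neg h)
    subst hs2
    have hPr : PrSig μ13 σrev (ω0, v11) = 1 / 2 := by
      rw [PrSig, Fintype.sum_bool]
      cases ω0 <;> norm_num [σrev, μ13]
    have hpost : (fun (_ : Ag) => postPub μ13 σrev (ω0, v11)) =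
        fun _ ω => if ω = ω0 then (1:ℝ) else 0 := by
      funext i ω
      rw [postPub, hPr]
      cases ω <;> cases ω0 <;> norm_num [σrev, μ13, Prod.ext_iff]
    show StableAt ty u 2 v11 _
    rw [hpost]
    exact stable_point u hu1 hu2 hu3 hu4 hu5 hu6 ω0
  · -- utilP σrev = 1
    have hin : ∀ ω, (∑ᶠ s : Wd × (Ag → Ac), σrev ω s * u0 (profileOf ty s.2) ω) = 1 := by
      intro ω
      rw [finsum_eq_sum_of_fintype, Finset.sum_eq_single (ω, v11)]
      · simp [σrev, prof_v11, h01]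
      · intro b _ hb
        simp [σrev, hb]
      · simp
    rw [utilP, Fintype.sum_bool, hin, hin]
    simp only [μ13]
    norm_num
  · -- σdir not stable
    intro h
    have hPr : PrSig μ13 σdir v11 = 1 := by
      rw [PrSig, Fintype.sum_bool]
      norm_num [σdir, μ13]
    have := h v11 (by rw [hPr]; norm_num)
    have hpost : (fun (_ : Ag) => postPub μ13 σdir v11) = fun _ => μ13 := by
      funext i ω
      rw [postPub, hPr]
      norm_num [σdir]
    rw [hpost] at this
    exact not_stable_prior u hu1 hu2 hu3 hu4 hu5 this
  · exact not_stable_prior u hu1 hu2 hu3 hu4 hu5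
  · -- the deviation payoffs
    intro i
    rw [prof_vdev, prof_v11, Fintype.sum_bool, Fintype.sum_bool]
    cases i <;> norm_num [vdev, v11, μ13, hu1, hu2, hu3, hu4, hu5]
  · -- every stable direct policy is suboptimal
    intro σd hpol hst
    obtain ⟨hnn, _, hsum⟩ := hpol
    have hsum' : ∀ ω, ∑ a : Ag → Ac, σd ω a = 1 := by
      intro ω
      rw [← finsum_eq_sum_of_fintype]
      exact hsum ω
    have hle : ∀ ω, σd ω v11 ≤ 1 := by
      intro ω
      rw [← hsum' ω]
      exact Finset.single_le_sum (fun a _ => hnn ω a) (Finset.mem_univ v11)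
    have hutil : utilP ty μ13 u0 (fun s => s) σd = (σd false v11 + σd true v11) / 2 := by
      have hin : ∀ ω, (∑ᶠ a : Ag → Ac, σd ω a * u0 (profileOf ty a) ω) = σd ω v11 := by
        intro ω
        rw [finsum_eq_sum_of_fintype, Finset.sum_eq_single v11]
        · rw [prof_v11, h01, mul_one]
        · intro a _ ha
          rw [h02 a ω (fun h => ha (eq_v11_of_prof h)), mul_zero]
        · simp
      rw [utilP, Fintype.sum_bool, hin, hin]
      simp only [μ13]
      ring
    have hb : utilP ty μ13 u0 (fun s => s) σd ≤ 1 := by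
      rw [hutil]
      have := hle false
      have := hle true
      linarith
    rcases hb.lt_or_eq with h | h
    · exact h
    exfalso
    rw [hutil] at h
    have h1 : σd false v11 = 1 := by have := hle false; have := hle true; linarith
    have h2 : σd true v11 = 1 := by have := hle false; have := hle true; linarith
    have hPr : PrSig μ13 σd v11 = 1 := by
      rw [PrSig, Fintype.sum_bool, h1, h2]
      simp only [μ13]
      norm_num
    have hstab := hst v11 (by rw [hPr]; norm_num)
    have hpost : (fun (_ : Ag) => postPub μ13 σd v11) = fun _ => μ13 := by
      funext i ω
      rw [postPub, hPr]
      cases ω <;> simp [h1, h2]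
    rw [hpost] at hstab
    exact not_stable_prior u hu1 hu2 hu3 hu4 hu5 hstab

end Stmt13
end Persuasion
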